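/- If f = λI + F is a formal power series with λ ≠ 0, F ∈ O_2, and F has positive radius of convergence, then the compositional inverse series f^{-1} = λ^{-1}I + G also has positive radius of convergence. -/

import Mathlib

open scoped ENNReal

noncomputable def pcoeff (f : PowerSeries ℂ) (k : ℕ) : ℂ := PowerSeries.coeff (R := ℂ) k f

/-- Composition of formal power series: (f∘g)_m = Σ_{k=0}^m f_k (g^k)_m. -/
noncomputable def pcomp (f g : PowerSeries ℂ) : PowerSeries ℂ :=
  PowerSeries.mk fun m => ∑ k ∈ Finset.range (m + 1), pcoeff f k * pcoeff (g ^ k) m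

/-- f ∈ O_m : the first m coefficients vanish. -/
def inO (m : ℕ) (f : PowerSeries ℂ) : Prop := ∀ i < m, pcoeff f i = 0

/-- Truncation [f]_d = f_0 + f_1 z + ... + f_d z^d, as a power series. -/
noncomputable def ptrunc (d : ℕ) (f : PowerSeries ℂ) : PowerSeries ℂ :=
  PowerSeries.mk fun k => if k ≤ d then pcoeff f k else 0

/-- Majorant evaluation f^(r) = Σ |f_k| r^k ∈ [0,∞]. -/
noncomputable def maj (f : PowerSeries ℂ) (r : ℝ≥0∞) : ℝ≥0∞ :=
  ∑' k, (‖pcoeff f k‖₊ : ℝ≥0∞) * r ^ k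

/-- Evaluation of a power series at a point. -/
noncomputable def peval (f : PowerSeries ℂ) (z : ℂ) : ℂ := ∑' k, pcoeff f k * z ^ k

/-- f has positive radius of convergence. -/
def posRadius (f : PowerSeries ℂ) : Prop :=
  ∃ r : ℝ, 0 < r ∧ Summable fun k => ‖pcoeff f k‖ * r ^ k

/-- The operator L_λ(H) = H∘(λI) − λH. -/
noncomputable def Lop (l : ℂ) (H : PowerSeries ℂ) : PowerSeries ℂ :=
  pcomp H (l • PowerSeries.X) - l • H

/-!
On one-variable formal multilinear series, `FormalMultilinearSeries.comp` is given by the same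
sum over compositions as the coefficients of `pcomp f h` when `h` has no constant term. So with
`p` and `q` the series of `f = λI + F` and of its inverse, `f ∘ f⁻¹ = I` says `p.comp q = id`.
As the linear term of `p` is invertible, `p` has Mathlib's left inverse `p.leftInv`, which has
positive radius whenever `p` does, by a majorant argument; associativity of composition forces
`q = p.leftInv`.
-/

open Finset

namespace Composition

def ofFinsupp {n : ℕ} (k : ℕ) (l : ℕ →₀ ℕ) (hsum : ∑ i ∈ range k, l i = n)
    (hpos : ∀ i ∈ range k, l i ≠ 0) : Composition n where
  blocks := List.ofFn fun j : Fin k => l j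
  blocks_pos := by
    simp only [List.mem_ofFn, forall_exists_index]
    rintro _ j rfl
    exact Nat.pos_of_ne_zero (hpos j (mem_range.2 j.2))
  blocks_sum := by rw [List.sum_ofFn, Fin.sum_univ_eq_sum_range, hsum]

theorem ofFinsupp_length {n k : ℕ} {l : ℕ →₀ ℕ} (hsum : ∑ i ∈ range k, l i = n)
    (hpos : ∀ i ∈ range k, l i ≠ 0) : (ofFinsupp k l hsum hpos).length = k := by
  simp [ofFinsupp, Composition.length]

theorem prod_blocksFun {M : Type*} [CommMonoid M] {n : ℕ} (c : Composition n) (g : ℕ → M) :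
    ∏ i, g (c.blocksFun i) = (c.blocks.map g).prod := by
  conv_rhs => rw [← c.ofFn_blocksFun, List.map_ofFn, List.prod_ofFn]
  rfl

theorem prod_blocksFun_ofFinsupp {M : Type*} [CommMonoid M] {n k : ℕ} {l : ℕ →₀ ℕ}
    (hsum : ∑ i ∈ range k, l i = n) (hpos : ∀ i ∈ range k, l i ≠ 0) (g : ℕ → M) :
    ∏ i, g ((ofFinsupp k l hsum hpos).blocksFun i) = ∏ i ∈ range k, g (l i) := by
  rw [prod_blocksFun]
  simp [ofFinsupp, List.prod_ofFn, Fin.prod_univ_eq_prod_range (fun i => g (l i))]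

theorem sum_blocks_toFinsupp {n : ℕ} (c : Composition n) :
    ∑ i ∈ range c.length, c.blocks.toFinsupp i = n := by
  rw [← Fin.sum_univ_eq_sum_range]
  conv_rhs => rw [← c.sum_blocksFun]
  exact sum_congr rfl fun i _ => List.toFinsupp_apply_fin _ _

theorem blocks_toFinsupp_ne_zero {n : ℕ} (c : Composition n) :
    ∀ i ∈ range c.length, c.blocks.toFinsupp i ≠ 0 := fun i hi => by
  rw [List.toFinsupp_apply_lt _ _ (mem_range.1 hi)]
  exact (c.blocks_pos (List.getElem_mem _)).ne'

theorem ofFinsupp_blocks_toFinsupp {n : ℕ} (c : Composition n) :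
    ofFinsupp c.length c.blocks.toFinsupp c.sum_blocks_toFinsupp c.blocks_toFinsupp_ne_zero =
      c := by
  ext1
  simp [ofFinsupp]

theorem blocks_ofFinsupp_toFinsupp {n k : ℕ} {l : ℕ →₀ ℕ} (hsum : ∑ i ∈ range k, l i = n)
    (hpos : ∀ i ∈ range k, l i ≠ 0) (hsupp : l.support ⊆ range k) :
    (ofFinsupp k l hsum hpos).blocks.toFinsupp = l := by
  ext i
  by_cases hi : i < k
  · rw [List.toFinsupp_apply_lt _ _ (by simpa [ofFinsupp] using hi)]
    simp [ofFinsupp]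
  · rw [List.toFinsupp_apply_le _ _ (by simpa [ofFinsupp] using hi)]
    exact (Finsupp.notMem_support_iff.1 fun hl => hi (mem_range.1 (hsupp hl))).symm

end Composition

namespace PowerSeries

variable {R : Type*} [CommSemiring R]

theorem coeff_pow_of_constantCoeff_eq_zero {h : R⟦X⟧} (h0 : constantCoeff h = 0) (k n : ℕ) :
    coeff n (h ^ k) = ∑ l ∈ (finsuppAntidiag (range k) n).filter (fun l => ∀ i ∈ range k, l i ≠ 0),
      ∏ i ∈ range k, coeff (l i) h := by
  rw [coeff_pow, sum_filter_of_ne]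
  intro l _ hne i hi hli
  exact hne (prod_eq_zero hi (by rw [hli, coeff_zero_eq_constantCoeff_apply, h0]))

theorem sum_mul_coeff_pow_eq_sum_compositions {h : R⟦X⟧} (h0 : constantCoeff h = 0)
    (a : ℕ → R) (n : ℕ) :
    ∑ k ∈ range (n + 1), a k * coeff n (h ^ k) =
      ∑ c : Composition n, a c.length * ∏ i, coeff (c.blocksFun i) h := by
  simp_rw [coeff_pow_of_constantCoeff_eq_zero h0, mul_sum]
  rw [sum_sigma']
  refine sum_bij' (fun x hx => Composition.ofFinsupp x.1 x.2 (by simp_all) (by simp_all))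
    (fun c _ => ⟨c.length, c.blocks.toFinsupp⟩) (fun _ _ => mem_univ _) ?_ ?_ ?_ ?_
  · intro c _
    simp only [mem_sigma, mem_filter, mem_finsuppAntidiag]
    exact ⟨mem_range.2 (Nat.lt_succ_of_le c.length_le),
      ⟨c.sum_blocks_toFinsupp, List.toFinsupp_support_subset _⟩, c.blocks_toFinsupp_ne_zero⟩
  · rintro ⟨k, l⟩ hkl
    simp only [mem_sigma, mem_filter, mem_finsuppAntidiag] at hkl
    exact Sigma.ext (Composition.ofFinsupp_length ..)
      (heq_of_eq (Composition.blocks_ofFinsupp_toFinsupp _ _ hkl.2.1.2))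
  · exact fun c _ => c.ofFinsupp_blocks_toFinsupp
  · rintro ⟨k, l⟩ _
    rw [Composition.prod_blocksFun_ofFinsupp _ _ (coeff · h), Composition.ofFinsupp_length]

end PowerSeries

namespace FormalMultilinearSeries

variable {𝕜 : Type*} [NontriviallyNormedField 𝕜]

theorem ext_coeff {E : Type*} [NormedAddCommGroup E] [NormedSpace 𝕜 E]
    {p q : FormalMultilinearSeries 𝕜 𝕜 E} (h : ∀ n, p.coeff n = q.coeff n) : p = q :=
  funext fun n => by rw [← mkPiRing_coeff_eq p, ← mkPiRing_coeff_eq q, h]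

theorem coeff_comp (p q : FormalMultilinearSeries 𝕜 𝕜 𝕜) (n : ℕ) :
    (p.comp q).coeff n =
      ∑ c : Composition n, p.coeff c.length * ∏ i, q.coeff (c.blocksFun i) := by
  change (∑ c : Composition n, p.compAlongComposition q c) 1 = _
  rw [_root_.sum_apply]
  refine sum_congr rfl fun c _ => ?_
  rw [compAlongComposition_apply, apply_eq_prod_smul_coeff, smul_eq_mul, mul_comm]
  rfl

theorem ofScalars_comp_ofScalars (a b : ℕ → 𝕜) :
    (ofScalars 𝕜 a).comp (ofScalars 𝕜 b) =
      ofScalars 𝕜 fun n => ∑ c : Composition n, a c.length * ∏ i, b (c.blocksFun i) :=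
  ext_coeff fun n => by simp only [coeff_comp, coeff_ofScalars]

theorem ofScalars_eq_id : ofScalars 𝕜 (fun n => if n = 1 then (1 : 𝕜) else 0) = id 𝕜 𝕜 0 := by
  refine ext_coeff fun n => ?_
  rw [coeff_ofScalars]
  match n with
  | 0 => exact (id_apply_zero 𝕜 𝕜 0 1).symm
  | 1 => exact (id_apply_one 𝕜 𝕜 0 1).symm
  | _ + 2 => simp [coeff]

theorem ofScalars_one {a : ℕ → 𝕜} (ha : a 1 ≠ 0) :
    ofScalars 𝕜 a 1 = (continuousMultilinearCurryFin1 𝕜 𝕜 𝕜).symm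
      (ContinuousLinearEquiv.unitsEquivAut 𝕜 (Units.mk0 (a 1) ha)) := by
  ext
  simp [ofScalars, ContinuousLinearEquiv.unitsEquivAut, mul_comm]

theorem eq_leftInv_of_comp_eq_id {E F : Type*} [NormedAddCommGroup E] [NormedSpace 𝕜 E]
    [NormedAddCommGroup F] [NormedSpace 𝕜 F] {p : FormalMultilinearSeries 𝕜 E F}
    {q : FormalMultilinearSeries 𝕜 F E} {i : E ≃L[𝕜] F}
    (hp : p 1 = (continuousMultilinearCurryFin1 𝕜 E F).symm i) {y : F}
    (hpq : p.comp q = id 𝕜 F y) : q = p.leftInv i (q 0 0) :=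
  calc q = (id 𝕜 E (q 0 0)).comp q := (id_comp' q _ 0 rfl).symm
    _ = ((p.leftInv i (q 0 0)).comp p).comp q := by rw [leftInv_comp p i _ hp]
    _ = (p.leftInv i (q 0 0)).comp (p.comp q) := comp_assoc _ _ _
    _ = p.leftInv i (q 0 0) := by rw [hpq, comp_id]

end FormalMultilinearSeries

open FormalMultilinearSeries

theorem pcoeff_pcomp (f h : PowerSeries ℂ) (h0 : pcoeff h 0 = 0) (n : ℕ) :
    pcoeff (pcomp f h) n =
      ∑ c : Composition n, pcoeff f c.length * ∏ i, pcoeff h (c.blocksFun i) := by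
  simp only [pcomp, pcoeff, PowerSeries.coeff_mk]
  exact PowerSeries.sum_mul_coeff_pow_eq_sum_compositions (by simpa [pcoeff] using h0) _ n

theorem ofScalars_pcoeff_pcomp (f h : PowerSeries ℂ) (h0 : pcoeff h 0 = 0) :
    ofScalars ℂ (pcoeff (pcomp f h)) = (ofScalars ℂ (pcoeff f)).comp (ofScalars ℂ (pcoeff h)) := by
  rw [ofScalars_comp_ofScalars]
  exact congrArg _ (funext (pcoeff_pcomp f h h0))

theorem ofScalars_pcoeff_X : ofScalars ℂ (pcoeff PowerSeries.X) = id ℂ ℂ 0 := by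
  rw [← ofScalars_eq_id]
  exact congrArg _ (funext fun n => PowerSeries.coeff_X n)

theorem posRadius_iff_radius_pos (f : PowerSeries ℂ) :
    posRadius f ↔ 0 < (ofScalars ℂ (pcoeff f)).radius := by
  constructor
  · rintro ⟨r, hr, hsum⟩
    lift r to NNReal using hr.le
    refine lt_of_lt_of_le ?_ ((ofScalars ℂ (pcoeff f)).le_radius_of_summable_norm
      (by simpa only [ofScalars_norm] using hsum))
    exact_mod_cast hr
  · intro hrad
    obtain ⟨r, hr, hlt⟩ := ENNReal.lt_iff_exists_nnreal_btwn.1 hrad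
    refine ⟨r, by exact_mod_cast hr, ?_⟩
    simpa only [ofScalars_norm] using summable_norm_mul_pow _ hlt

theorem posRadius.add {f h : PowerSeries ℂ} (hf : posRadius f) (hh : posRadius h) :
    posRadius (f + h) := by
  rw [posRadius_iff_radius_pos] at *
  have hcoeff : pcoeff (f + h) = pcoeff f + pcoeff h := funext fun k => map_add _ f h
  rw [hcoeff, ofScalars_add]
  exact (lt_min hf hh).trans_le (min_radius_le_radius_add _ _)

theorem posRadius_smul_X (l : ℂ) : posRadius (l • PowerSeries.X) :=
  ⟨1, one_pos, summable_of_ne_finset_zero (s := {1}) fun k hk => by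
    simp [pcoeff, PowerSeries.coeff_X, mem_singleton.not.1 hk]⟩

theorem inverse_posRadius_general (l : ℂ) (hl : l ≠ 0) (F G : PowerSeries ℂ)
    (hF : inO 2 F) (hFrad : posRadius F) (hG : inO 2 G)
    (hinv1 : pcomp (l • PowerSeries.X + F) (l⁻¹ • PowerSeries.X + G) = PowerSeries.X) :
    posRadius (l⁻¹ • PowerSeries.X + G) := by
  set f := l • PowerSeries.X + F
  set g := l⁻¹ • PowerSeries.X + G
  have hf1 : pcoeff f 1 = l := by simpa [f, pcoeff] using hF 1 one_lt_two
  have hg0 : pcoeff g 0 = 0 := by simpa [g, pcoeff] using hG 0 two_pos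
  have hp1 := ofScalars_one (hf1 ▸ hl : pcoeff f 1 ≠ 0)
  have hcomp : (ofScalars ℂ (pcoeff f)).comp (ofScalars ℂ (pcoeff g)) = id ℂ ℂ 0 := by
    rw [← ofScalars_pcoeff_pcomp f g hg0, hinv1, ofScalars_pcoeff_X]
  rw [posRadius_iff_radius_pos, eq_leftInv_of_comp_eq_id hp1 hcomp]
  exact radius_leftInv_pos_of_radius_pos
    ((posRadius_iff_radius_pos f).1 ((posRadius_smul_X l).add hFrad)) hp1

theorem inverse_posRadius (l : ℂ) (hl : l ≠ 0) (F G : PowerSeries ℂ)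
    (hF : inO 2 F) (hFrad : posRadius F) (hG : inO 2 G)
    (hinv1 : pcomp (l • PowerSeries.X + F) (l⁻¹ • PowerSeries.X + G) = PowerSeries.X)
    (hinv2 : pcomp (l⁻¹ • PowerSeries.X + G) (l • PowerSeries.X + F) = PowerSeries.X) :
    posRadius (l⁻¹ • PowerSeries.X + G) :=
  inverse_posRadius_general l hl F G hF hFrad hG hinv1
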